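/- Let G be a connected graph, not a 4-cycle, with 2-cuts with the same neighbours S_1,…,S_q. For any β ⊆ 𝒯_G := ⊔_i T_{S_i}, the composition ψ_β := φ_{S_1,β_1} ∘ ⋯ ∘ φ_{S_q,β_q}, where β_i := β ∩ T_{S_i}, is an automorphism of F_k(G); moreover the factors pairwise commute: φ_{S_i,β_i} ∘ φ_{S_j,β_j} = φ_{S_j,β_j} ∘ φ_{S_i,β_i} for all i, j. -/

import Mathlib

open scoped Classical symmDiff

variable {V : Type*}

/-- The `k`-token graph of `G`: vertices are the `k`-subsets of `V(G)`,
two being adjacent iff their symmetric difference is an edge of `G`. -/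
def tokenGraph [DecidableEq V] (G : SimpleGraph V) (k : ℕ) :
    SimpleGraph {A : Finset V // A.card = k} where
  Adj A B := ∃ a b : V, G.Adj a b ∧ (A.1 ∆ B.1) = {a, b}
  symm := by
    constructor
    rintro A B ⟨a, b, hab, h⟩
    exact ⟨a, b, hab, by rwa [symmDiff_comm]⟩
  loopless := by
    constructor
    rintro A ⟨a, b, hab, h⟩
    rw [symmDiff_self] at h
    exact (Finset.insert_ne_empty a {b}) h.symm

/-- `S` is a 2-cut with the same neighbours: a 2-element vertex set whose removal
disconnects `G` and whose two vertices have the same neighbours outside `S`. -/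
def SameNbrCut (G : SimpleGraph V) (S : Finset V) : Prop :=
  S.card = 2 ∧ ¬ (G.induce ((↑S : Set V)ᶜ)).Preconnected ∧
    ∀ x ∈ S, ∀ y ∈ S, ∀ v ∉ S, (G.Adj x v ↔ G.Adj y v)

/-- `A^S = (A \ S) ∪ (S \ A)`. -/
def tokenMove [DecidableEq V] (A S : Finset V) : Finset V := (A \ S) ∪ (S \ A)

/-- The connected components of `G \ S`. -/
abbrev delComp (G : SimpleGraph V) (S : Finset V) :=
  (G.induce ((↑S : Set V)ᶜ)).ConnectedComponent

/-- The distribution tuple of `A` over the components of `G \ S`. -/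
noncomputable def compDist (G : SimpleGraph V) (S : Finset V) (A : Finset V)
    (c : delComp G S) : ℕ :=
  {v : ((↑S : Set V)ᶜ : Set V) | (v : V) ∈ A ∧
    (G.induce ((↑S : Set V)ᶜ)).connectedComponentMk v = c}.ncard

/-- `T_S`: distribution tuples with `kᵢ ≤ nᵢ` summing to `k - 1`. -/
def TS (G : SimpleGraph V) (S : Finset V) (k : ℕ) : Set (delComp G S → ℕ) :=
  {t | (∀ c, t c ≤ c.supp.ncard) ∧ ∑ᶠ c, t c = k - 1}

/-- The map `φ_{S,α}` on `k`-subsets. -/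
noncomputable def phiFun [DecidableEq V] (G : SimpleGraph V) (S : Finset V)
    (α : Set (delComp G S → ℕ)) (A : Finset V) : Finset V :=
  if compDist G S A ∈ α then tokenMove A S else A

/-- The map `ψ_β`, the composition of the `φ_{Sᵢ,βᵢ}`. -/
noncomputable def psiFun [DecidableEq V] (G : SimpleGraph V) {q : ℕ}
    (S : Fin q → Finset V) (β : ∀ i, Set (delComp G (S i) → ℕ)) :
    Finset V → Finset V :=
  (List.ofFn (fun i => phiFun G (S i) (β i))).foldr (· ∘ ·) id

/-!
`φ_{S,α}` toggles the token sitting in the twin pair `S` on the `k`-sets whose distribution over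
the components of `G - S` lies in `α`. Toggling `S` does not change that distribution, so `φ` is an
involution, and a distribution in `T_S` leaves exactly one token in `S`, so `φ` preserves `k`-sets.
A token moving along an edge either stays inside one component of `G - S`, stays inside `S`, or
crosses `S`; only in the last case can `φ` act differently on the two ends, and then it redirects
the move to the twin vertex, which has the same outside neighbours. So each `φ` is an automorphism
of `F_k(G)`, and so is their composition `ψ`.

For commutation, two distinct same-neighbour 2-cuts `S, T` are disjoint, and `T` lies in a single
component of `G - S`: otherwise all neighbours of `T` lie in `S`, and unless `G` is a 4-cycle some
vertex outside `T` is equal or adjacent to each of them, so walks through `T` can be rerouted and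
`G - T` would be connected. Hence toggling `T` moves a token within one component of `G - S`, so
`φ_T` does not change which `k`-sets `φ_S` acts on.
-/

namespace Finset

variable {α : Type*} [DecidableEq α] {s A B : Finset α} {a b : α}

lemma exists_eq_pair_of_card_eq_two_of_mem (hs : #s = 2) (ha : a ∈ s) :
    ∃ b, a ≠ b ∧ s = {a, b} := by
  obtain ⟨x, y, hxy, rfl⟩ := card_eq_two.mp hs
  rcases mem_insert.mp ha with rfl | ha
  · exact ⟨y, hxy, rfl⟩
  · rw [mem_singleton] at ha
    exact ⟨x, ha ▸ hxy.symm, ha ▸ pair_comm x y⟩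

lemma mem_iff_notMem_of_symmDiff_eq_pair (hab : a ≠ b) (hAB : #A = #B)
    (hd : A ∆ B = {a, b}) : a ∈ A ↔ b ∉ A := by
  have hcard : #(A \ B) = 1 ∧ #(B \ A) = 1 := by
    have h2 : #(A \ B) + #(B \ A) = 2 := by
      rw [← card_union_of_disjoint disjoint_sdiff_sdiff, ← sup_eq_union, ← symmDiff_def, hd,
        card_pair hab]
    have := card_sdiff_comm hAB
    omega
  have ha : a ∈ A ∆ B := by simp [hd]
  have hb : b ∈ A ∆ B := by simp [hd]
  rw [mem_symmDiff] at ha hb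
  have hpair : ∀ t : Finset α, a ∈ t → b ∈ t → 2 ≤ #t := fun t hat hbt =>
    card_pair hab ▸ card_le_card (by simp [insert_subset_iff, hat, hbt])
  constructor
  · intro haA hbA
    have := hpair (A \ B) (by grind) (by grind)
    omega
  · intro hbA
    by_contra haA
    have := hpair (B \ A) (by grind) (by grind)
    omega

end Finset

lemma RelIso.coe_prod_ofFn_apply {α : Type*} {p : α → Prop} {r : Subtype p → Subtype p → Prop}
    {q : ℕ} (e : Fin q → r ≃r r) (f : Fin q → α → α) (he : ∀ i x, (e i x : α) = f i x)
    (x : Subtype p) : ((List.ofFn e).prod x : α) = (List.ofFn f).foldr (· ∘ ·) id x := by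
  induction q with
  | zero => rfl
  | succ q ih =>
    simp only [List.ofFn_succ, List.prod_cons, List.foldr_cons, RelIso.mul_apply, he,
      Function.comp_apply]
    rw [ih (fun i => e i.succ) (fun i => f i.succ) (fun i => he i.succ)]

namespace SimpleGraph

variable {G : SimpleGraph V}

lemma Preconnected.mem_of_adj_closed (hG : G.Preconnected) {C : Set V}
    (hC : ∀ a ∈ C, ∀ b, G.Adj a b → b ∈ C) {c : V} (hc : c ∈ C) (w : V) : w ∈ C := by
  have h := (reachable_iff_reflTransGen c w).mp (hG c w)
  induction h with
  | refl => exact hc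
  | tail _ hab ih => exact hC _ ih _ hab

/-- Every walk of `G` through `s` can be rerouted through `r`. -/
lemma Preconnected.induce_compl (hG : G.Preconnected) {s : Set V} {r : V} (hr : r ∉ s)
    (h : ∀ x ∈ s, ∀ a ∉ s, G.Adj x a → a = r ∨ G.Adj r a) : (G.induce sᶜ).Preconnected := by
  classical
  let g : V → (sᶜ : Set V) := fun a => if ha : a ∈ s then ⟨r, hr⟩ else ⟨a, ha⟩
  have hind {a b : V} (ha : a ∉ s) (hb : b ∉ s) (hab : G.Adj a b) :
      (G.induce sᶜ).Reachable ⟨a, ha⟩ ⟨b, hb⟩ :=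
    Adj.reachable hab
  have hg : ∀ a b, G.Adj a b → (G.induce sᶜ).Reachable (g a) (g b) := by
    intro a b hab
    by_cases ha : a ∈ s <;> by_cases hb : b ∈ s
    · simp [g, ha, hb]
    · rcases h a ha b hb hab with rfl | hrb
      · simp [g, ha, hr]
      · simpa [g, ha, hb] using hind hr hb hrb
    · rcases h b hb a ha hab.symm with rfl | hra
      · simp [g, hb, hr]
      · simpa [g, ha, hb] using (hind hr ha hra).symm
    · simpa [g, ha, hb] using hind ha hb hab
  rintro ⟨a, ha⟩ ⟨b, hb⟩
  have hab : Relation.ReflTransGen (G.induce sᶜ).Adj (g a) (g b) :=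
    Relation.ReflTransGen.lift' g (fun a b h => (reachable_iff_reflTransGen _ _).mp (hg a b h))
      a b ((reachable_iff_reflTransGen a b).mp (hG a b))
  rw [← reachable_iff_reflTransGen] at hab
  simpa [g, show a ∉ s from ha, show b ∉ s from hb] using hab

lemma nonempty_iso_cycleGraph_four {x u y v : V} (hxy : x ≠ y) (huv : u ≠ v)
    (hcover : ∀ w, w = x ∨ w = u ∨ w = y ∨ w = v)
    (hxu : G.Adj x u) (huy : G.Adj u y) (hyv : G.Adj y v) (hvx : G.Adj v x)
    (hnxy : ¬ G.Adj x y) (hnuv : ¬ G.Adj u v) : Nonempty (G ≃g cycleGraph 4) := by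
  let f : Fin 4 → V := ![x, u, y, v]
  have hf : Function.Bijective f := by
    refine ⟨fun i j hij => ?_, fun w => ?_⟩
    · fin_cases i <;> fin_cases j <;> simp_all [f, hxu.ne, huy.ne, hyv.ne, hvx.ne, hxu.ne',
        huy.ne', hyv.ne', hvx.ne', hxy.symm, huv.symm]
    · rcases hcover w with rfl | rfl | rfl | rfl
      exacts [⟨0, rfl⟩, ⟨1, rfl⟩, ⟨2, rfl⟩, ⟨3, rfl⟩]
  refine ⟨(RelIso.mk (Equiv.ofBijective f hf) ?_).symm⟩
  intro i j
  have hnyx : ¬ G.Adj y x := fun h => hnxy h.symm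
  have hnvu : ¬ G.Adj v u := fun h => hnuv h.symm
  fin_cases i <;> fin_cases j <;> simp +decide [f, hxu, huy, hyv, hvx, hnxy, hnuv,
    hxu.symm, huy.symm, hyv.symm, hvx.symm, hnyx, hnvu]

end SimpleGraph

section DistributionTuple

open SimpleGraph Finset

variable {G : SimpleGraph V} {S A B : Finset V} {k : ℕ}

lemma compDist_congr (h : ∀ v ∉ S, (v ∈ A ↔ v ∈ B)) : compDist G S A = compDist G S B := by
  funext c
  unfold compDist
  congr! 3 with v
  rw [h v v.2]

variable [DecidableEq V]

lemma tokenMove_eq_symmDiff (A S : Finset V) : tokenMove A S = A ∆ S := by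
  rw [symmDiff_def, sup_eq_union]; rfl

lemma compDist_symmDiff_self : compDist G S (A ∆ S) = compDist G S A :=
  compDist_congr fun v hv => by simp [mem_symmDiff, hv]

lemma compDist_symmDiff_pair {w w' : ((↑S : Set V)ᶜ : Set V)}
    (hr : (G.induce ((↑S : Set V)ᶜ)).Reachable w w') (hA : (w : V) ∈ A ↔ (w' : V) ∉ A) :
    compDist G S (A ∆ {(w : V), (w' : V)}) = compDist G S A := by
  funext c
  -- `swap w w'` matches the tokens of `A ∆ {w, w'}` with those of `A`, component by component
  have hσ : ∀ v : ((↑S : Set V)ᶜ : Set V),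
      ((v : V) ∈ A ∆ {(w : V), (w' : V)} ↔ (Equiv.swap w w' v : V) ∈ A) ∧
      (G.induce ((↑S : Set V)ᶜ)).connectedComponentMk (Equiv.swap w w' v) =
        (G.induce ((↑S : Set V)ᶜ)).connectedComponentMk v := by
    intro v
    rcases eq_or_ne v w with rfl | h1
    · simp [mem_symmDiff, ConnectedComponent.sound hr, hA]
    rcases eq_or_ne v w' with rfl | h2
    · simp [mem_symmDiff, ConnectedComponent.sound hr, hA]
    simp [Equiv.swap_apply_of_ne_of_ne h1 h2, mem_symmDiff, Subtype.val_injective.ne h1,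
      Subtype.val_injective.ne h2]
  unfold compDist
  convert Set.ncard_preimage_of_injective_subset_range (Equiv.swap w w').injective (by simp)
    using 2
  ext v
  simp only [Set.mem_ofPred_eq, Set.mem_preimage, (hσ v).1, (hσ v).2]

lemma finsum_compDist [Fintype V] (G : SimpleGraph V) (S A : Finset V) :
    ∑ᶠ c, compDist G S A c = #(A \ S) := by
  set H := G.induce ((↑S : Set V)ᶜ)
  let A' : Finset ((↑S : Set V)ᶜ : Set V) := A.subtype (· ∈ ((↑S : Set V)ᶜ))
  have hc : ∀ c, compDist G S A c = #(A'.filter (H.connectedComponentMk · = c)) := by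
    intro c
    rw [compDist, ← Set.ncard_coe_finset]
    congr 1
    ext v
    simp [A', H]
  rw [finsum_eq_sum_of_fintype]
  simp_rw [hc]
  convert sum_card_fiberwise_eq_card_filter A' univ H.connectedComponentMk
  simp [A', card_subtype, sdiff_eq_filter]

lemma card_inter_eq_one_of_compDist_mem_TS [Fintype V] (hk : 1 ≤ k) (hA : #A = k)
    (ht : compDist G S A ∈ TS G S k) : #(A ∩ S) = 1 := by
  have := card_inter_add_card_sdiff A S
  have := finsum_compDist G S A
  have := ht.2
  omega

lemma card_symmDiff_of_card_inter_eq_one (hS : #S = 2) (h : #(A ∩ S) = 1) :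
    #(A ∆ S) = #A := by
  rw [symmDiff_def, sup_eq_union, card_union_of_disjoint disjoint_sdiff_sdiff]
  have := card_inter_add_card_sdiff A S
  have := card_inter_add_card_sdiff S A
  rw [inter_comm] at this
  omega

end DistributionTuple

section Phi

open SimpleGraph Finset

variable [DecidableEq V] {G : SimpleGraph V} {S A B : Finset V} {α : Set (delComp G S → ℕ)}
  {k : ℕ}

lemma phiFun_of_compDist_eq (h : compDist G S B = compDist G S A) :
    phiFun G S α B = if compDist G S A ∈ α then B ∆ S else B := by
  rw [phiFun, h, tokenMove_eq_symmDiff]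

lemma compDist_phiFun (A : Finset V) : compDist G S (phiFun G S α A) = compDist G S A := by
  unfold phiFun
  split_ifs
  · rw [tokenMove_eq_symmDiff, compDist_symmDiff_self]
  · rfl

lemma phiFun_involutive : Function.Involutive (phiFun G S α) := by
  intro A
  rw [phiFun_of_compDist_eq (compDist_phiFun A), phiFun]
  split_ifs
  · rw [tokenMove_eq_symmDiff, symmDiff_symmDiff_cancel_right]
  · rfl

lemma card_phiFun [Fintype V] (hS : #S = 2) (hα : α ⊆ TS G S k) (hk : 1 ≤ k) (hA : #A = k) :
    #(phiFun G S α A) = k := by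
  unfold phiFun
  split_ifs with h
  · rw [tokenMove_eq_symmDiff, card_symmDiff_of_card_inter_eq_one hS
      (card_inter_eq_one_of_compDist_mem_TS hk hA (hα h)), hA]
  · exact hA

lemma phiFun_symmDiff_of_compDist_eq (h : compDist G S A = compDist G S B) :
    phiFun G S α A ∆ phiFun G S α B = A ∆ B := by
  rw [phiFun_of_compDist_eq h.symm, phiFun]
  split_ifs
  · rw [tokenMove_eq_symmDiff, symmDiff_symmDiff_symmDiff_comm, symmDiff_self, symmDiff_bot]
  · rfl

lemma phiFun_symmDiff_eq_or :
    phiFun G S α A ∆ phiFun G S α B = A ∆ B ∨ phiFun G S α A ∆ phiFun G S α B = A ∆ B ∆ S := by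
  unfold phiFun
  simp only [tokenMove_eq_symmDiff]
  split_ifs
  · left; rw [symmDiff_symmDiff_symmDiff_comm, symmDiff_self, symmDiff_bot]
  · right; rw [symmDiff_right_comm]
  · right; rw [symmDiff_assoc]
  · left; rfl

lemma SameNbrCut.exists_adj_phiFun_symmDiff_of_mem_of_notMem (hS : SameNbrCut G S) {a b : V}
    (haS : a ∈ S) (hbS : b ∉ S) (hab : G.Adj a b) (hd : A ∆ B = {a, b}) :
    ∃ a' b', G.Adj a' b' ∧ phiFun G S α A ∆ phiFun G S α B = {a', b'} := by
  obtain ⟨y, hay, hSay⟩ := exists_eq_pair_of_card_eq_two_of_mem hS.1 haS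
  have hyS : y ∈ S := by simp [hSay]
  rcases phiFun_symmDiff_eq_or (α := α) (A := A) (B := B) with h | h
  · exact ⟨a, b, hab, h.trans hd⟩
  · -- the token crossing the edge `ab` is moved to the twin `y` of `a`
    refine ⟨y, b, (hS.2.2 a haS y hyS b hbS).mp hab, ?_⟩
    have hby : b ≠ y := by rintro rfl; exact hbS hyS
    have hba : b ≠ a := by rintro rfl; exact hbS haS
    rw [h, hd, hSay]
    ext v
    simp only [mem_symmDiff, mem_insert, mem_singleton]
    grind

lemma SameNbrCut.exists_adj_phiFun_symmDiff (hS : SameNbrCut G S) (hAB : #A = #B) {a b : V}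
    (hab : G.Adj a b) (hd : A ∆ B = {a, b}) :
    ∃ a' b', G.Adj a' b' ∧ phiFun G S α A ∆ phiFun G S α B = {a', b'} := by
  by_cases haS : a ∈ S <;> by_cases hbS : b ∈ S
  · refine ⟨a, b, hab, hd ▸ phiFun_symmDiff_of_compDist_eq (compDist_congr fun v hv => ?_)⟩
    have hv' : v ∉ A ∆ B := by
      rw [hd]
      simp only [mem_insert, mem_singleton, not_or]
      exact ⟨fun h => hv (h ▸ haS), fun h => hv (h ▸ hbS)⟩
    rw [mem_symmDiff] at hv'
    tauto
  · exact hS.exists_adj_phiFun_symmDiff_of_mem_of_notMem haS hbS hab hd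
  · exact hS.exists_adj_phiFun_symmDiff_of_mem_of_notMem hbS haS hab.symm
      (by rw [hd, pair_comm])
  · refine ⟨a, b, hab, hd ▸ phiFun_symmDiff_of_compDist_eq ?_⟩
    have hB : B = A ∆ {a, b} := by rw [← hd, symmDiff_symmDiff_cancel_left]
    rw [hB]
    exact (compDist_symmDiff_pair (w := ⟨a, haS⟩) (w' := ⟨b, hbS⟩)
      (Adj.reachable (G := G.induce _) hab)
      (mem_iff_notMem_of_symmDiff_eq_pair hab.ne hAB hd)).symm

/-- `φ_{S,α}` as an automorphism of `F_k(G)`. -/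
noncomputable def SameNbrCut.phiIso [Fintype V] (hS : SameNbrCut G S) (hα : α ⊆ TS G S k)
    (hk : 1 ≤ k) : tokenGraph G k ≃g tokenGraph G k where
  toEquiv := Function.Involutive.toPerm (fun A => ⟨phiFun G S α A, card_phiFun hS.1 hα hk A.2⟩)
    fun A => Subtype.ext (phiFun_involutive A.1)
  map_rel_iff' {A B} := by
    refine ⟨fun ⟨a, b, hab, hd⟩ => ?_, fun ⟨a, b, hab, hd⟩ =>
      hS.exists_adj_phiFun_symmDiff (A.2.trans B.2.symm) hab hd⟩
    have := hS.exists_adj_phiFun_symmDiff (α := α)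
      ((card_phiFun hS.1 hα hk A.2).trans (card_phiFun hS.1 hα hk B.2).symm) hab hd
    rwa [phiFun_involutive A.1, phiFun_involutive B.1] at this

end Phi

section Commuting

open SimpleGraph Finset

variable [DecidableEq V] {G : SimpleGraph V} {S T A : Finset V} {k : ℕ}

lemma SameNbrCut.disjoint (hG : G.Preconnected) (hS : SameNbrCut G S) (hT : SameNbrCut G T)
    (hne : S ≠ T) : Disjoint S T := by
  rw [Finset.disjoint_left]
  intro z hzS hzT
  obtain ⟨y, hzy, hSzy⟩ := exists_eq_pair_of_card_eq_two_of_mem hS.1 hzS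
  obtain ⟨v, hzv, hTzv⟩ := exists_eq_pair_of_card_eq_two_of_mem hT.1 hzT
  have hvT : v ∈ T := by simp [hTzv]
  have hvS : v ∉ S := by
    rw [hSzy]
    simp only [mem_insert, mem_singleton, not_or]
    exact ⟨hzv.symm, fun hvy => hne (by rw [hSzy, hTzv, hvy])⟩
  -- every outside neighbour of `S` is `v` or adjacent to `v`, so removing `S` disconnects nothing
  refine hS.2.1 (hG.induce_compl (s := ↑S) (r := v) (by simpa) fun x hx a ha hxa => ?_)
  have hza : G.Adj z a := (hS.2.2 x hx z hzS a ha).mp hxa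
  by_cases hav : a = v
  · exact Or.inl hav
  · have haT : a ∉ T := by
      rw [hTzv]
      simp only [mem_insert, mem_singleton, not_or]
      exact ⟨fun h => ha (h ▸ hzS), hav⟩
    exact Or.inr ((hT.2.2 z hzT v hvT a haT).mp hza)

lemma SameNbrCut.mem_of_adj_of_not_reachable {u v : ((↑S : Set V)ᶜ : Set V)}
    (hT : SameNbrCut G {(u : V), (v : V)})
    (huv : ¬ (G.induce ((↑S : Set V)ᶜ)).Reachable u v) {a : V} (ha : G.Adj u a) : a ∈ S := by
  by_contra haS
  have hav : a ≠ v := by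
    rintro rfl
    exact huv (Adj.reachable (G := G.induce _) ha)
  have hva : G.Adj v a := (hT.2.2 u (by simp) v (by simp) a (by simp [ha.ne', hav])).mp ha
  exact huv ((Adj.reachable (G := G.induce _) (v := ⟨a, haS⟩) ha).trans
    (Adj.reachable (G := G.induce _) (u := ⟨a, haS⟩) hva.symm))

lemma SameNbrCut.nonempty_iso_cycleGraph_four (hG : G.Preconnected) {x y u v : V}
    (hS : SameNbrCut G {x, y}) (hxy : x ≠ y) (huv : u ≠ v) (hvS : v ≠ x ∧ v ≠ y)
    (hNu : ∀ a, G.Adj u a → a = x ∨ a = y) (hN : ∀ a, G.Adj u a ↔ G.Adj v a)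
    (hux : G.Adj u x) (huy : G.Adj u y) (hnxy : ¬ G.Adj x y)
    (hNx : ∀ b, G.Adj x b → b = u ∨ b = v) : Nonempty (G ≃g cycleGraph 4) := by
  have hNy : ∀ b, G.Adj y b → b = u ∨ b = v := by
    intro b hyb
    have hbS : b ∉ ({x, y} : Finset V) := by
      simp only [mem_insert, mem_singleton, not_or]
      exact ⟨fun h => hnxy (h ▸ hyb).symm, hyb.ne'⟩
    exact hNx b ((hS.2.2 y (by simp) x (by simp) b hbS).mp hyb)
  have hC : ∀ a ∈ ({x, u, y, v} : Set V), ∀ b, G.Adj a b → b ∈ ({x, u, y, v} : Set V) := by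
    intro a ha b hab
    simp only [Set.mem_insert_iff, Set.mem_singleton_iff] at ha ⊢
    rcases ha with rfl | rfl | rfl | rfl
    · have := hNx b hab; tauto
    · have := hNu b hab; tauto
    · have := hNy b hab; tauto
    · have := hNu b ((hN b).mpr hab); tauto
  refine SimpleGraph.nonempty_iso_cycleGraph_four hxy huv (fun w => ?_) hux.symm huy
    ((hN y).mp huy).symm ((hN x).mp hux) hnxy fun h => ?_
  · simpa using hG.mem_of_adj_closed hC (c := x) (by simp) w
  · rcases hNu v h with rfl | rfl
    exacts [hvS.1 rfl, hvS.2 rfl]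

/-- With `S = {x, y}`, take `r = x` if `u ≁ y` or `x ∼ y`, `r = y` if `u ≁ x`, and otherwise a
neighbour of `x` outside `{u, v}`; if there is none, `G` is the 4-cycle `x u y v`. -/
lemma SameNbrCut.exists_reroute (hG : G.Preconnected) (h4 : IsEmpty (G ≃g cycleGraph 4))
    (hS : SameNbrCut G S) {u v : V} (huv : u ≠ v) (huS : u ∉ S) (hvS : v ∉ S)
    (hNu : ∀ a, G.Adj u a → a ∈ S) (hN : ∀ a, G.Adj u a ↔ G.Adj v a) :
    ∃ r, r ≠ u ∧ r ≠ v ∧ ∀ a, G.Adj u a → a = r ∨ G.Adj r a := by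
  obtain ⟨x, y, hxy, rfl⟩ := card_eq_two.mp hS.1
  have hNu' : ∀ a, G.Adj u a → a = x ∨ a = y := by simpa using hNu
  simp only [mem_insert, mem_singleton, not_or] at huS hvS
  have hxu : x ≠ u := fun h => huS.1 h.symm
  have hxv : x ≠ v := fun h => hvS.1 h.symm
  by_cases hux : G.Adj u x; swap
  · exact ⟨y, fun h => huS.2 h.symm, fun h => hvS.2 h.symm,
      fun a ha => Or.inl ((hNu' a ha).resolve_left fun h => hux (h ▸ ha))⟩
  by_cases huy : G.Adj u y; swap
  · exact ⟨x, hxu, hxv, fun a ha => Or.inl ((hNu' a ha).resolve_right fun h => huy (h ▸ ha))⟩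
  by_cases hxy' : G.Adj x y
  · exact ⟨x, hxu, hxv, fun a ha => (hNu' a ha).imp_right fun (h : a = y) => h ▸ hxy'⟩
  by_cases hw : ∃ w, G.Adj x w ∧ w ≠ u ∧ w ≠ v
  · obtain ⟨w, hxw, hwu, hwv⟩ := hw
    have hwS : w ∉ ({x, y} : Finset V) := by
      simp only [mem_insert, mem_singleton, not_or]
      exact ⟨hxw.ne', fun h => hxy' (h ▸ hxw)⟩
    refine ⟨w, hwu, hwv, fun a ha => Or.inr ?_⟩
    rcases hNu' a ha with rfl | rfl
    · exact hxw.symm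
    · exact ((hS.2.2 x (by simp) a (by simp) w hwS).mp hxw).symm
  push Not at hw
  exact absurd (hS.nonempty_iso_cycleGraph_four hG hxy huv hvS hNu' hN hux huy hxy'
    fun b hxb => or_iff_not_imp_left.mpr (hw b hxb)) (not_nonempty_iff.mpr h4)

lemma SameNbrCut.reachable_of_mem (hG : G.Connected) (h4 : IsEmpty (G ≃g cycleGraph 4))
    (hS : SameNbrCut G S) (hT : SameNbrCut G T) (hne : S ≠ T) {u v : ((↑S : Set V)ᶜ : Set V)}
    (hu : (u : V) ∈ T) (hv : (v : V) ∈ T) : (G.induce ((↑S : Set V)ᶜ)).Reachable u v := by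
  by_contra huv
  have huv' : (u : V) ≠ v := fun h => huv (Subtype.ext h ▸ Reachable.refl _)
  obtain rfl : T = {(u : V), (v : V)} := (eq_of_subset_of_card_le
    (by simp [insert_subset_iff, hu, hv]) (by rw [hT.1, card_pair huv'])).symm
  have hNu : ∀ a, G.Adj u a → a ∈ S := fun a => hT.mem_of_adj_of_not_reachable huv
  have hnuv : ¬ G.Adj u v := fun h => v.2 (hNu _ h)
  have hN : ∀ a, G.Adj u a ↔ G.Adj v a := by
    intro a
    by_cases haT : a ∈ ({(u : V), (v : V)} : Finset V)
    · rcases (by simpa using haT : a = u ∨ a = v) with rfl | rfl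
      · simp [G.adj_comm _ (u : V), hnuv]
      · simp [hnuv]
    · exact hT.2.2 u (by simp) v (by simp) a haT
  obtain ⟨r, hru, hrv, hr⟩ := hS.exists_reroute hG.preconnected h4 huv' u.2 v.2 hNu hN
  refine hT.2.1 (hG.preconnected.induce_compl (r := r) (by simp [hru, hrv])
    fun x hx a _ hxa => hr a ?_)
  rcases (by simpa using hx : x = u ∨ x = v) with rfl | rfl
  exacts [hxa, (hN a).mpr hxa]

lemma SameNbrCut.compDist_symmDiff (hG : G.Connected) (h4 : IsEmpty (G ≃g cycleGraph 4))
    (hS : SameNbrCut G S) (hT : SameNbrCut G T) (hne : S ≠ T) (hAT : #(A ∩ T) = 1) :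
    compDist G S (A ∆ T) = compDist G S A := by
  obtain ⟨w, hw⟩ := card_eq_one.mp hAT
  have hwA : w ∈ A ∧ w ∈ T := mem_inter.mp (hw ▸ mem_singleton_self w)
  obtain ⟨w', hww', rfl⟩ := exists_eq_pair_of_card_eq_two_of_mem hT.1 hwA.2
  have hw'A : w' ∉ A := fun h => hww' (mem_singleton.mp (hw ▸ mem_inter.mpr ⟨h, by simp⟩)).symm
  have hdisj := hS.disjoint hG.preconnected hT hne
  exact compDist_symmDiff_pair (w := ⟨w, disjoint_right.mp hdisj hwA.2⟩)
    (w' := ⟨w', disjoint_right.mp hdisj (by simp)⟩)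
    (hS.reachable_of_mem hG h4 hT hne (by simp) (by simp)) (by simp [hwA.1, hw'A])

variable [Fintype V]

lemma SameNbrCut.compDist_phiFun_of_ne (hG : G.Connected) (h4 : IsEmpty (G ≃g cycleGraph 4))
    (hS : SameNbrCut G S) (hT : SameNbrCut G T) (hne : S ≠ T) {α : Set (delComp G T → ℕ)}
    (hα : α ⊆ TS G T k) (hk : 1 ≤ k) (hA : #A = k) :
    compDist G S (phiFun G T α A) = compDist G S A := by
  rw [phiFun]
  split_ifs with h
  · rw [tokenMove_eq_symmDiff]
    exact hS.compDist_symmDiff hG h4 hT hne (card_inter_eq_one_of_compDist_mem_TS hk hA (hα h))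
  · rfl

lemma SameNbrCut.phiFun_comm (hG : G.Connected) (h4 : IsEmpty (G ≃g cycleGraph 4))
    (hS : SameNbrCut G S) (hT : SameNbrCut G T) (hne : S ≠ T) {α : Set (delComp G S → ℕ)}
    {α' : Set (delComp G T → ℕ)} (hα : α ⊆ TS G S k) (hα' : α' ⊆ TS G T k) (hk : 1 ≤ k)
    (hA : #A = k) : phiFun G S α (phiFun G T α' A) = phiFun G T α' (phiFun G S α A) := by
  rw [phiFun_of_compDist_eq (hS.compDist_phiFun_of_ne hG h4 hT hne hα' hk hA),
    phiFun_of_compDist_eq (hT.compDist_phiFun_of_ne hG h4 hS hne.symm hα hk hA), phiFun, phiFun]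
  split_ifs <;> simp only [tokenMove_eq_symmDiff, symmDiff_right_comm]

end Commuting

theorem psi_is_automorphism_general [Fintype V] [DecidableEq V] (G : SimpleGraph V)
    (hG : G.Connected) (h4 : IsEmpty (G ≃g SimpleGraph.cycleGraph 4))
    (k : ℕ) (hk1 : 1 ≤ k)
    (q : ℕ) (S : Fin q → Finset V) (hinj : Function.Injective S)
    (hcut : ∀ i, SameNbrCut G (S i))
    (β : ∀ i, Set (delComp G (S i) → ℕ)) (hβ : ∀ i, β i ⊆ TS G (S i) k) :
    (∃ e : tokenGraph G k ≃g tokenGraph G k,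
        ∀ A : {A : Finset V // A.card = k},
          ((e A : {B : Finset V // B.card = k}) : Finset V) = psiFun G S β (↑A : Finset V)) ∧
      ∀ (i j : Fin q) (A : Finset V), A.card = k →
        phiFun G (S i) (β i) (phiFun G (S j) (β j) A)
          = phiFun G (S j) (β j) (phiFun G (S i) (β i) A) := by
  refine ⟨⟨(List.ofFn fun i => (hcut i).phiIso (hβ i) hk1).prod, fun A => ?_⟩, fun i j A hA => ?_⟩
  · exact RelIso.coe_prod_ofFn_apply _ _ (fun i A => rfl) A
  · rcases eq_or_ne i j with rfl | hij
    · rfl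
    · exact (hcut i).phiFun_comm hG h4 (hcut j) (hinj.ne hij) (hβ i) (hβ j) hk1 hA

/-- Corollary 2 and equation (3): `ψ_β` is an automorphism of
`F_k(G)` and its factors `φ_{Sᵢ,βᵢ}` pairwise commute. -/
theorem psi_is_automorphism [Fintype V] [DecidableEq V] (G : SimpleGraph V)
    (hG : G.Connected) (h4 : IsEmpty (G ≃g SimpleGraph.cycleGraph 4))
    (k : ℕ) (hk1 : 1 ≤ k) (hk2 : k ≤ Fintype.card V - 1)
    (q : ℕ) (S : Fin q → Finset V) (hinj : Function.Injective S)
    (hcut : ∀ i, SameNbrCut G (S i))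
    (hall : ∀ T : Finset V, SameNbrCut G T → ∃ i, T = S i)
    (β : ∀ i, Set (delComp G (S i) → ℕ)) (hβ : ∀ i, β i ⊆ TS G (S i) k) :
    (∃ e : tokenGraph G k ≃g tokenGraph G k,
        ∀ A : {A : Finset V // A.card = k},
          ((e A : {B : Finset V // B.card = k}) : Finset V) = psiFun G S β (↑A : Finset V)) ∧
      ∀ (i j : Fin q) (A : Finset V), A.card = k →
        phiFun G (S i) (β i) (phiFun G (S j) (β j) A)
          = phiFun G (S j) (β j) (phiFun G (S i) (β i) A) :=
  psi_is_automorphism_general G hG h4 k hk1 q S hinj hcut β hβ
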